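/- arXiv:1508.04248 — 9 statements merged into one kernel-verified Lean document; each statement's English description precedes it below -/
import Mathlib

section
/- If g and h are two elements generating the cyclic group Z_n, then there exists a generator g' of Z_n and integers s, t with gcd(s,t)=1 such that g = g'^s and h = g'^t. -/
lemma closure_of_isUnit {n : ℕ} [NeZero n] {c : ZMod n} (hc : IsUnit c) :
    AddSubgroup.closure ({c} : Set (ZMod n)) = ⊤ := by
  obtain ⟨u, rfl⟩ := hc
  rw [eq_top_iff]
  intro x _
  rw [AddSubgroup.mem_closure_singleton]
  refine ⟨((x * ↑u⁻¹ : ZMod n).val : ℤ), ?_⟩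
  rw [zsmul_eq_mul, Int.cast_natCast, ZMod.natCast_val, ZMod.cast_id]
  rw [mul_assoc]
  simp

/-- If `g` and `h` generate the cyclic group `ℤ/n`, then there is a generator `g'`
of `ℤ/n` and integers `s, t` with `gcd(s,t) = 1` such that `g = g'^s` and `h = g'^t`
(written additively). -/
theorem stmt_0 (n : ℕ) (hn : 0 < n) (g h : ZMod n)
    (hgen : AddSubgroup.closure ({g, h} : Set (ZMod n)) = ⊤) :
    ∃ (g' : ZMod n) (s t : ℤ), AddSubgroup.closure ({g'} : Set (ZMod n)) = ⊤ ∧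
      Int.gcd s t = 1 ∧ g = s • g' ∧ h = t • g' := by
  haveI : NeZero n := ⟨hn.ne'⟩
  set a : ℤ := (g.val : ℤ) with ha
  set b : ℤ := (h.val : ℤ) with hb
  have hga : g = (a : ZMod n) := by simp [ha, ZMod.natCast_val, ZMod.cast_id]
  have hhb : h = (b : ZMod n) := by simp [hb, ZMod.natCast_val, ZMod.cast_id]
  -- Bezout from generation
  have h1 : (1 : ZMod n) ∈ AddSubgroup.closure ({g, h} : Set (ZMod n)) := by
    rw [hgen]; trivial
  rw [AddSubgroup.mem_closure_pair] at h1
  obtain ⟨x, y, hxy⟩ := h1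
  set d : ℕ := Int.gcd a b with hd
  by_cases hd0 : d = 0
  · -- a = b = 0, so 1 = 0 in ZMod n, n = 1, everything trivial
    have ha0 : a = 0 := (Int.gcd_eq_zero_iff.mp (hd ▸ hd0)).1
    have hb0 : b = 0 := (Int.gcd_eq_zero_iff.mp (hd ▸ hd0)).2
    have : (1 : ZMod n) = 0 := by
      rw [← hxy, hga, hhb, ha0, hb0]; simp
    refine ⟨0, 1, 1, ?_, by norm_num, ?_, ?_⟩
    · rw [eq_top_iff]; intro z _
      have hz : z = 0 := by
        calc z = z * 1 := (mul_one z).symm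
        _ = 0 := by rw [this, mul_zero]
      rw [hz]; exact AddSubgroup.zero_mem _
    · rw [hga, ha0]; simp
    · rw [hhb, hb0]; simp
  have hdpos : 0 < d := Nat.pos_of_ne_zero hd0
  have hda : (d : ℤ) ∣ a := Int.gcd_dvd_left a b
  have hdb : (d : ℤ) ∣ b := Int.gcd_dvd_right a b
  -- gcd(d, n) = 1
  have hdn : Nat.Coprime d n := by
    have : ((x * a + y * b : ℤ) : ZMod n) = 1 := by
      push_cast
      rw [← hga, ← hhb, ← hxy, zsmul_eq_mul, zsmul_eq_mul]
    have hmod : ((x * a + y * b - 1 : ℤ) : ZMod n) = 0 := by push_cast [this]; ring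
    rw [ZMod.intCast_zmod_eq_zero_iff_dvd] at hmod
    obtain ⟨m, hm⟩ := hmod
    have hco : IsCoprime (d : ℤ) (n : ℤ) := by
      refine ⟨x * (a / d) + y * (b / d), -m, ?_⟩
      have h1 : (x * (a / d) + y * (b / d)) * d = x * a + y * b := by
        rw [add_mul, mul_assoc, mul_assoc, Int.ediv_mul_cancel hda, Int.ediv_mul_cancel hdb]
      rw [h1]
      linarith [hm]
    have := Int.isCoprime_iff_gcd_eq_one.mp hco
    simpa [Int.gcd_natCast_natCast] using this
  refine ⟨(d : ZMod n), a / d, b / d, ?_, ?_, ?_, ?_⟩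
  · exact closure_of_isUnit ((ZMod.isUnit_iff_coprime d n).mpr hdn)
  · exact Int.gcd_div_gcd_div_gcd hdpos
  · rw [hga, zsmul_eq_mul, show ((d : ℕ) : ZMod n) = ((d : ℤ) : ZMod n) by push_cast; ring,
      ← Int.cast_mul, Int.ediv_mul_cancel hda]
  · rw [hhb, zsmul_eq_mul, show ((d : ℕ) : ZMod n) = ((d : ℤ) : ZMod n) by push_cast; ring,
      ← Int.cast_mul, Int.ediv_mul_cancel hdb]
end

section
/- If h1 and h2 generate the group Z_m × Z_m, then the cyclic subgroups generated by h1 and by h2 intersect trivially, and hence (h1, h2) form a standard pair of generators, i.e., there is an automorphism of Z_m × Z_m sending the canonical generators to h1 and h2. -/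
/-- If `h1` and `h2` generate `ℤ/m × ℤ/m`, then the cyclic subgroups generated by
`h1` and `h2` intersect trivially, and `(h1, h2)` is a standard pair of generators:
there is an automorphism of `ℤ/m × ℤ/m` sending the canonical generators `(1,0)`
and `(0,1)` to `h1` and `h2`. -/
theorem stmt_1 (m : ℕ) (hm : 0 < m) (h1 h2 : ZMod m × ZMod m)
    (hgen : AddSubgroup.closure ({h1, h2} : Set (ZMod m × ZMod m)) = ⊤) :
    AddSubgroup.zmultiples h1 ⊓ AddSubgroup.zmultiples h2 = ⊥ ∧
    ∃ σ : (ZMod m × ZMod m) ≃+ (ZMod m × ZMod m),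
      σ (1, 0) = h1 ∧ σ (0, 1) = h2 := by
  haveI : NeZero m := ⟨hm.ne'⟩
  set f : (ZMod m × ZMod m) →+ (ZMod m × ZMod m) :=
    { toFun := fun p => p.1 • h1 + p.2 • h2
      map_zero' := by simp
      map_add' := fun p q => by
        simp [add_smul]
        abel } with hf
  have hf1 : f (1, 0) = h1 := by simp [hf]
  have hf2 : f (0, 1) = h2 := by simp [hf]
  have hsurj : Function.Surjective f := by
    rw [← AddMonoidHom.range_eq_top]
    rw [← top_le_iff, ← hgen]
    refine (AddSubgroup.closure_le _).mpr ?_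
    rintro x (rfl | rfl)
    · exact ⟨(1, 0), hf1⟩
    · exact ⟨(0, 1), hf2⟩
  have hinj : Function.Injective f :=
    (Finite.injective_iff_surjective).mpr hsurj
  have hsm1 : ∀ n : ℤ, n • h1 = f ((n : ZMod m), 0) := by
    intro n
    simp [hf, Int.cast_smul_eq_zsmul]
  have hsm2 : ∀ n : ℤ, n • h2 = f (0, (n : ZMod m)) := by
    intro n
    simp [hf, Int.cast_smul_eq_zsmul]
  constructor
  · refine le_antisymm ?_ bot_le
    rintro x ⟨⟨n, rfl⟩, ⟨k, hk⟩⟩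
    dsimp only at hk ⊢
    have : f ((n : ZMod m), 0) = f (0, (k : ZMod m)) := by
      rw [← hsm1, ← hsm2, hk]
    have h0 : ((n : ZMod m), (0 : ZMod m)) = ((0 : ZMod m), (k : ZMod m)) := hinj this
    have : (n : ZMod m) = 0 := (Prod.mk.injEq _ _ _ _).mp h0 |>.1
    rw [AddSubgroup.mem_bot, hsm1, this]
    exact map_zero f
  · exact ⟨AddEquiv.ofBijective f ⟨hinj, hsurj⟩, hf1, hf2⟩
end

section
/- For natural numbers 0 ≤ a < m, 0 ≤ b < gcd(m,n), 0 ≤ d < n, the map Φ_{a,b,d} on Z_m × Z_n defined by Φ_{a,b,d}(g1^i g2^j, g1^s g2^t, g1^k g2^l) = ζ_m^{a i ⌊(k+s)/m⌋} ζ_n^{b j ⌊(k+s)/m⌋} ζ_n^{d j ⌊(t+l)/n⌋} (with 0 ≤ i,s,k < m and 0 ≤ j,t,l < n) is a normalized 3-cocycle on Z_m × Z_n. -/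
/-- The map `Φ_{a,b,d}` on `ℤ/m × ℤ/n` (written additively):
`Φ_{a,b,d}((i,j),(s,t),(k,l)) = ζm^(a·i·⌊(k+s)/m⌋) · ζn^(b·j·⌊(k+s)/m⌋) · ζn^(d·j·⌊(t+l)/n⌋)`. -/
noncomputable def Phiabd {k : Type*} [Field k] (m n : ℕ) (ζm ζn : kˣ) (a b d : ℕ)
    (x y z : ZMod m × ZMod n) : kˣ :=
  ζm ^ (a * x.1.val * ((z.1.val + y.1.val) / m)) *
  ζn ^ (b * x.2.val * ((z.1.val + y.1.val) / m)) *
  ζn ^ (d * x.2.val * ((y.2.val + z.2.val) / n))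

private lemma div_key (m : ℕ) (hm : 0 < m) (A B : ℕ) :
    A / m + (A % m + B) / m = (A + B) / m := by
  conv_rhs => rw [← Nat.mod_add_div A m]
  rw [Nat.add_right_comm, Nat.add_mul_div_left _ _ hm]
  omega

private lemma tri (m : ℕ) (hm : 0 < m) (y z w : ℕ) :
    (z + y) / m + (w + (y + z) % m) / m = (w + z) / m + ((z + w) % m + y) / m := by
  rw [add_comm z y, add_comm w ((y + z) % m), div_key m hm, add_comm w z, div_key m hm]
  congr 1; omega

private lemma tri' (n : ℕ) (hn : 0 < n) (y z w : ℕ) :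
    (y + z) / n + ((y + z) % n + w) / n = (z + w) / n + (y + (z + w) % n) / n := by
  rw [div_key n hn, add_comm y ((z + w) % n), div_key n hn]
  congr 1; omega

private lemma pow_eq_of_modEq {k : Type*} [Field k] {ζ : kˣ} {N : ℕ}
    (h : IsPrimitiveRoot ζ N) {e₁ e₂ : ℕ} (he : e₁ ≡ e₂ [MOD N]) : ζ ^ e₁ = ζ ^ e₂ := by
  rw [pow_eq_pow_iff_modEq, ← h.eq_orderOf]
  exact he

/-- For `0 ≤ a < m`, `0 ≤ b < gcd(m,n)`, `0 ≤ d < n`, the map `Φ_{a,b,d}` is a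
normalized 3-cocycle on `ℤ/m × ℤ/n`. -/
theorem stmt_4 (k : Type*) [Field k] [IsAlgClosed k] [CharZero k]
    (m n : ℕ) [NeZero m] [NeZero n]
    (ζm ζn : kˣ) (hζm : IsPrimitiveRoot ζm m) (hζn : IsPrimitiveRoot ζn n)
    (a b d : ℕ) (ha : a < m) (hb : b < Nat.gcd m n) (hd : d < n) :
    (∀ x y z w : ZMod m × ZMod n,
        Phiabd m n ζm ζn a b d x y z * Phiabd m n ζm ζn a b d x (y + z) w *
          Phiabd m n ζm ζn a b d y z w =
        Phiabd m n ζm ζn a b d (x + y) z w * Phiabd m n ζm ζn a b d x y (z + w)) ∧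
    (∀ x y : ZMod m × ZMod n, Phiabd m n ζm ζn a b d x 0 y = 1) := by
  have hm : 0 < m := Nat.pos_of_ne_zero (NeZero.ne m)
  have hn : 0 < n := Nat.pos_of_ne_zero (NeZero.ne n)
  have main : ∀ E1 E2 E3 E4 E5 F1 F2 F3 F4 F5 F6 F7 F8 F9 F10 : ℕ,
      E1 + E2 + E3 ≡ E4 + E5 [MOD m] →
      F1 + F2 + F3 + F4 + F5 + F6 ≡ F7 + F8 + F9 + F10 [MOD n] →
      ζm ^ E1 * ζn ^ F1 * ζn ^ F2 * (ζm ^ E2 * ζn ^ F3 * ζn ^ F4) *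
        (ζm ^ E3 * ζn ^ F5 * ζn ^ F6) =
      ζm ^ E4 * ζn ^ F7 * ζn ^ F8 * (ζm ^ E5 * ζn ^ F9 * ζn ^ F10) := by
    intro E1 E2 E3 E4 E5 F1 F2 F3 F4 F5 F6 F7 F8 F9 F10 hE hF
    have h1 : ζm ^ (E1 + E2 + E3) = ζm ^ (E4 + E5) := pow_eq_of_modEq hζm hE
    have h2 : ζn ^ (F1 + F2 + F3 + F4 + F5 + F6) = ζn ^ (F7 + F8 + F9 + F10) :=
      pow_eq_of_modEq hζn hF
    calc ζm ^ E1 * ζn ^ F1 * ζn ^ F2 * (ζm ^ E2 * ζn ^ F3 * ζn ^ F4) *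
          (ζm ^ E3 * ζn ^ F5 * ζn ^ F6)
        = ζm ^ (E1 + E2 + E3) * ζn ^ (F1 + F2 + F3 + F4 + F5 + F6) := by
          simp only [pow_add]
          simp [mul_assoc, mul_comm, mul_left_comm]
      _ = ζm ^ (E4 + E5) * ζn ^ (F7 + F8 + F9 + F10) := by rw [h1, h2]
      _ = ζm ^ E4 * ζn ^ F7 * ζn ^ F8 * (ζm ^ E5 * ζn ^ F9 * ζn ^ F10) := by
          simp only [pow_add]
          simp [mul_assoc, mul_comm, mul_left_comm]
  constructor
  · rintro ⟨x1, x2⟩ ⟨y1, y2⟩ ⟨z1, z2⟩ ⟨w1, w2⟩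
    simp only [Phiabd, Prod.fst_add, Prod.snd_add, ZMod.val_add, Prod.mk_add_mk]
    apply main
    · -- mod m congruence
      rw [← ZMod.natCast_eq_natCast_iff]
      have K : (((z1.val + y1.val) / m : ℕ) : ZMod m) +
          ((w1.val + (y1.val + z1.val) % m) / m : ℕ) =
          (((w1.val + z1.val) / m : ℕ) : ZMod m) +
          (((z1.val + w1.val) % m + y1.val) / m : ℕ) := by
        have := tri m hm y1.val z1.val w1.val
        exact_mod_cast congrArg (fun t : ℕ => (t : ZMod m)) this
      push_cast [ZMod.natCast_mod]
      linear_combination ((a : ZMod m) * x1.val) * K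
    · -- mod n congruence
      rw [← ZMod.natCast_eq_natCast_iff]
      have Km : (((z1.val + y1.val) / m : ℕ) : ZMod n) +
          ((w1.val + (y1.val + z1.val) % m) / m : ℕ) =
          (((w1.val + z1.val) / m : ℕ) : ZMod n) +
          (((z1.val + w1.val) % m + y1.val) / m : ℕ) := by
        have := tri m hm y1.val z1.val w1.val
        exact_mod_cast congrArg (fun t : ℕ => (t : ZMod n)) this
      have Kn : (((y2.val + z2.val) / n : ℕ) : ZMod n) +
          (((y2.val + z2.val) % n + w2.val) / n : ℕ) =
          (((z2.val + w2.val) / n : ℕ) : ZMod n) +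
          ((y2.val + (z2.val + w2.val) % n) / n : ℕ) := by
        have := tri' n hn y2.val z2.val w2.val
        exact_mod_cast congrArg (fun t : ℕ => (t : ZMod n)) this
      push_cast [ZMod.natCast_mod]
      linear_combination ((b : ZMod n) * x2.val) * Km + ((d : ZMod n) * x2.val) * Kn
  · intro x y
    simp [Phiabd, Nat.div_eq_of_lt (ZMod.val_lt y.1), Nat.div_eq_of_lt (ZMod.val_lt y.2)]
end

section
/- Let g, h be elements of Z_m × Z_n (with m | n) and suppose whenever g^s h^t = 1 one has m | s and m | t (this holds by Lemma 4.1 of [qha5] when g,h generate the group). If integers α1, α2, β1, β2, s1, s2, t1, t2 satisfy h1 = g1^{α1} g2^{α2}, h2 = g1^{β1} g2^{β2}, g1 = h1^{s1} h2^{s2}, g2 = h1^{t1} h2^{t2} in Z_m × Z_n with standard generators g1, g2, then the matrix congruence (s1 t1; s2 t2)·(α1 β1; α2 β2) ≡ identity modulo m holds entrywise. -/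
/-- Let `h1, h2 ∈ ℤ/m × ℤ/n` (with `m ∣ n`) be such that whenever `s • h1 + t • h2 = 0`
one has `m ∣ s` and `m ∣ t`.  If integers `α1, α2, β1, β2, s1, s2, t1, t2` express
`h1, h2` in the standard generators `g1 = (1,0)`, `g2 = (0,1)` and conversely, then
`(s1 t1; s2 t2)·(α1 β1; α2 β2) ≡ I (mod m)` entrywise. -/
theorem stmt_8 (m n : ℕ) (hm : 0 < m) (hdvd : m ∣ n)
    (h1 h2 : ZMod m × ZMod n)
    (hkey : ∀ s t : ℤ, s • h1 + t • h2 = 0 → (m : ℤ) ∣ s ∧ (m : ℤ) ∣ t)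
    (α1 α2 β1 β2 s1 s2 t1 t2 : ℤ)
    (hh1 : h1 = α1 • ((1 : ZMod m), (0 : ZMod n)) + α2 • ((0 : ZMod m), (1 : ZMod n)))
    (hh2 : h2 = β1 • ((1 : ZMod m), (0 : ZMod n)) + β2 • ((0 : ZMod m), (1 : ZMod n)))
    (hg1 : ((1 : ZMod m), (0 : ZMod n)) = s1 • h1 + s2 • h2)
    (hg2 : ((0 : ZMod m), (1 : ZMod n)) = t1 • h1 + t2 • h2) :
    s1 * α1 + t1 * α2 ≡ 1 [ZMOD m] ∧ s1 * β1 + t1 * β2 ≡ 0 [ZMOD m] ∧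
    s2 * α1 + t2 * α2 ≡ 0 [ZMOD m] ∧ s2 * β1 + t2 * β2 ≡ 1 [ZMOD m] := by
  have e1 : (α1 * s1 + α2 * t1 - 1) • h1 + (α1 * s2 + α2 * t2) • h2 = 0 := by
    rw [hg1, hg2] at hh1
    linear_combination (norm := module) (-1 : ℤ) • hh1
  have e2 : (β1 * s1 + β2 * t1) • h1 + (β1 * s2 + β2 * t2 - 1) • h2 = 0 := by
    rw [hg1, hg2] at hh2
    linear_combination (norm := module) (-1 : ℤ) • hh2
  obtain ⟨d1, d2⟩ := hkey _ _ e1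
  obtain ⟨d3, d4⟩ := hkey _ _ e2
  refine ⟨?_, ?_, ?_, ?_⟩
  · exact (Int.ModEq.symm (Int.modEq_iff_dvd.mpr (by convert d1 using 1; ring)))
  · exact (Int.ModEq.symm (Int.modEq_iff_dvd.mpr (by convert d3 using 1; ring)))
  · exact (Int.ModEq.symm (Int.modEq_iff_dvd.mpr (by convert d2 using 1; ring)))
  · exact (Int.ModEq.symm (Int.modEq_iff_dvd.mpr (by convert d4 using 1; ring)))
end

section
/- Suppose h1, h2 generate Z_m × Z_n with m | n. If h1^s h2^t = 1 for integers s, t, then m divides both s and t. -/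
/-- Key lemma: in `(ZMod m)²`, if `x, y` generate the group and `s•x + t•y = 0`,
then `m ∣ s` and `m ∣ t`. -/
lemma key_lemma (m : ℕ) (hm : 0 < m) (x y : ZMod m × ZMod m)
    (hgen : AddSubgroup.closure ({x, y} : Set (ZMod m × ZMod m)) = ⊤)
    (s t : ℤ) (h : s • x + t • y = 0) :
    (m : ℤ) ∣ s ∧ (m : ℤ) ∣ t := by
  haveI : NeZero m := ⟨hm.ne'⟩
  set f : (ZMod m × ZMod m) →ₗ[ZMod m] (ZMod m × ZMod m) :=
    (LinearMap.fst (ZMod m) (ZMod m) (ZMod m)).smulRight x +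
      (LinearMap.snd (ZMod m) (ZMod m) (ZMod m)).smulRight y with hf
  have hfx : f (1, 0) = x := by simp [hf]
  have hfy : f (0, 1) = y := by simp [hf]
  have hsurj : Function.Surjective f := by
    rw [← LinearMap.range_eq_top, eq_top_iff]
    intro z _
    have hz : z ∈ AddSubgroup.closure ({x, y} : Set (ZMod m × ZMod m)) := by
      rw [hgen]; trivial
    refine AddSubgroup.closure_induction ?_ ?_ ?_ ?_ hz
    · rintro w (rfl | rfl)
      · exact ⟨(1, 0), hfx⟩
      · exact ⟨(0, 1), hfy⟩
    · exact Submodule.zero_mem _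
    · intro a b _ _ ha hb; exact Submodule.add_mem _ ha hb
    · intro a _ ha; exact Submodule.neg_mem _ ha
  have hinj : Function.Injective f :=
    Finite.injective_iff_surjective.mpr hsurj
  have hval : f ((s : ZMod m), (t : ZMod m)) = 0 := by
    simp only [hf, LinearMap.add_apply, LinearMap.smulRight_apply,
      LinearMap.fst_apply, LinearMap.snd_apply]
    rw [Int.cast_smul_eq_zsmul, Int.cast_smul_eq_zsmul]
    exact h
  have h0 : ((s : ZMod m), (t : ZMod m)) = (0 : ZMod m × ZMod m) :=
    hinj (by rw [hval, map_zero])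
  constructor
  · exact (ZMod.intCast_zmod_eq_zero_iff_dvd s m).mp (congrArg Prod.fst h0)
  · exact (ZMod.intCast_zmod_eq_zero_iff_dvd t m).mp (congrArg Prod.snd h0)

/-- If `h1, h2` generate `ℤ/m × ℤ/n` with `m ∣ n` and `s • h1 + t • h2 = 0` for
integers `s, t`, then `m` divides both `s` and `t`. -/
theorem stmt_9 (m n : ℕ) (hm : 0 < m) (hdvd : m ∣ n)
    (h1 h2 : ZMod m × ZMod n)
    (hgen : AddSubgroup.closure ({h1, h2} : Set (ZMod m × ZMod n)) = ⊤)
    (s t : ℤ) (h : s • h1 + t • h2 = 0) :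
    (m : ℤ) ∣ s ∧ (m : ℤ) ∣ t := by
  set φ : (ZMod m × ZMod n) →+ (ZMod m × ZMod m) :=
    AddMonoidHom.prodMap (AddMonoidHom.id (ZMod m))
      (ZMod.castHom hdvd (ZMod m)).toAddMonoidHom with hφ
  have hφsurj : Function.Surjective φ := by
    rintro ⟨a, b⟩
    obtain ⟨b', hb'⟩ := ZMod.ringHom_surjective (ZMod.castHom hdvd (ZMod m)) b
    exact ⟨(a, b'), by simp [hφ, hb']⟩
  have hgen' : AddSubgroup.closure ({φ h1, φ h2} : Set (ZMod m × ZMod m)) = ⊤ := by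
    have hmap : AddSubgroup.map φ (AddSubgroup.closure {h1, h2}) =
        AddSubgroup.closure (φ '' {h1, h2}) := AddMonoidHom.map_closure φ _
    rw [hgen, AddSubgroup.map_top_of_surjective φ hφsurj] at hmap
    rw [show ({φ h1, φ h2} : Set (ZMod m × ZMod m)) = φ '' {h1, h2} by
      simp [Set.image_insert_eq]]
    exact hmap.symm
  have hrel : s • φ h1 + t • φ h2 = 0 := by
    rw [← map_zsmul, ← map_zsmul, ← map_add, h, map_zero]
  exact key_lemma m hm (φ h1) (φ h2) hgen' s t hrel
end

section
/- Under the same matrix-congruence hypotheses, any solution (a, b, d) of the system a·α1·(𝕟/𝕞) + b·α2 ≡ x11·(𝕟/𝕞) (mod 𝕟), a·β1·(𝕟/𝕞) + b·β2 ≡ x12·(𝕟/𝕞) (mod 𝕟), d·α2 ≡ x21 (mod 𝕟), d·β2 ≡ x22 (mod 𝕟) with 0 ≤ a, b < 𝕞 and 0 ≤ d < 𝕟 must equal a = (x11 s1 + x12 s2) mod 𝕞, b = ((𝕟/𝕞)(x11 t1 + x12 t2)) mod 𝕞, d = (t1 x21 + t2 x22) mod 𝕟; in particular the system has at most one solution in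 that range. -/
/-- Uniqueness of the solution: any solution `(a, b, d)` of the system with
`0 ≤ a, b < 𝕞` and `0 ≤ d < 𝕟` equals `a = (x11·s1 + x12·s2) mod 𝕞`,
`b = ((𝕟/𝕞)·(x11·t1 + x12·t2)) mod 𝕞`, `d = (t1·x21 + t2·x22) mod 𝕟`. -/
theorem stmt_11 (mm nn : ℕ) (hmm : 0 < mm) (hdvd : mm ∣ nn)
    (α1 α2 β1 β2 s1 s2 t1 t2 x11 x12 x21 x22 : ℤ)
    -- (α1 β1; α2 β2)·(s1 t1; s2 t2) ≡ I, first row mod 𝕞², second row mod 𝕟²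
    (hA11 : α1 * s1 + β1 * s2 ≡ 1 [ZMOD (mm ^ 2 : ℕ)])
    (hA12 : α1 * t1 + β1 * t2 ≡ 0 [ZMOD (mm ^ 2 : ℕ)])
    (hA21 : α2 * s1 + β2 * s2 ≡ 0 [ZMOD (nn ^ 2 : ℕ)])
    (hA22 : α2 * t1 + β2 * t2 ≡ 1 [ZMOD (nn ^ 2 : ℕ)])
    (a b d : ℤ) (ha0 : 0 ≤ a) (ha1 : a < mm) (hb0 : 0 ≤ b) (hb1 : b < mm)
    (hd0 : 0 ≤ d) (hd1 : d < nn)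
    (h1 : a * α1 * ((nn / mm : ℕ) : ℤ) + b * α2 ≡ x11 * ((nn / mm : ℕ) : ℤ) [ZMOD nn])
    (h2 : a * β1 * ((nn / mm : ℕ) : ℤ) + b * β2 ≡ x12 * ((nn / mm : ℕ) : ℤ) [ZMOD nn])
    (h3 : d * α2 ≡ x21 [ZMOD nn])
    (h4 : d * β2 ≡ x22 [ZMOD nn]) :
    a = (x11 * s1 + x12 * s2) % (mm : ℤ) ∧
    b = (((nn / mm : ℕ) : ℤ) * (x11 * t1 + x12 * t2)) % (mm : ℤ) ∧
    d = (t1 * x21 + t2 * x22) % (nn : ℤ) := by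
  set k : ℤ := ((nn / mm : ℕ) : ℤ) with hkdef
  have hk : (nn : ℤ) = (mm : ℤ) * k := by
    rw [hkdef, ← Nat.cast_mul, Nat.mul_div_cancel' hdvd]
  have hn0 : (0:ℤ) < (nn:ℤ) := lt_of_le_of_lt hd0 hd1
  have hm0 : (0:ℤ) < (mm:ℤ) := by exact_mod_cast hmm
  have hk0 : (0:ℤ) < k := by nlinarith
  -- divisibility facts from the matrix congruences
  have Dm : ((mm:ℤ)) ∣ (((mm^2 : ℕ):ℤ)) := by push_cast; exact dvd_pow_self _ two_ne_zero
  have Dn : ((nn:ℤ)) ∣ (((nn^2 : ℕ):ℤ)) := by push_cast; exact dvd_pow_self _ two_ne_zero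
  have D1 : (mm:ℤ) ∣ (α1 * s1 + β1 * s2 - 1) := dvd_trans Dm hA11.symm.dvd
  have D2 : (mm:ℤ) ∣ (α1 * t1 + β1 * t2) := dvd_trans Dm (by simpa using hA12.symm.dvd)
  have D3 : (nn:ℤ) ∣ (α2 * s1 + β2 * s2) := dvd_trans Dn (by simpa using hA21.symm.dvd)
  have D4 : (nn:ℤ) ∣ (α2 * t1 + β2 * t2 - 1) := dvd_trans Dn hA22.symm.dvd
  obtain ⟨p, hp⟩ := D1
  obtain ⟨p', hp'⟩ := D2
  obtain ⟨q, hq⟩ := D3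
  obtain ⟨q', hq'⟩ := D4
  have mdvdn : (mm:ℤ) ∣ (nn:ℤ) := Int.natCast_dvd_natCast.mpr hdvd
  obtain ⟨r1, hr1⟩ := ((h1.mul_right s1).add (h2.mul_right s2)).dvd
  obtain ⟨r2, hr2⟩ := ((h1.mul_right t1).add (h2.mul_right t2)).dvd
  obtain ⟨r3, hr3⟩ := ((h3.mul_left t1).add (h4.mul_left t2)).dvd
  refine ⟨?_, ?_, ?_⟩
  · have key : (nn:ℤ) ∣ (a - (x11 * s1 + x12 * s2)) * k :=
      ⟨-r1 - a * p - b * q, by linear_combination -hr1 - a * k * hp - b * hq + a * p * hk⟩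
    rw [hk] at key
    have hma : (mm:ℤ) ∣ (a - (x11 * s1 + x12 * s2)) :=
      (mul_dvd_mul_iff_right hk0.ne').mp key
    have hmod : a % (mm:ℤ) = (x11 * s1 + x12 * s2) % (mm:ℤ) :=
      Int.ModEq.symm (Int.modEq_iff_dvd.mpr hma)
    rwa [Int.emod_eq_of_lt ha0 ha1] at hmod
  · have key : (nn:ℤ) ∣ (b - k * (x11 * t1 + x12 * t2)) :=
      ⟨-r2 - a * p' - b * q', by linear_combination -hr2 - a * k * hp' - b * hq' + a * p' * hk⟩
    have hma : (mm:ℤ) ∣ (b - k * (x11 * t1 + x12 * t2)) := dvd_trans mdvdn key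
    have hmod : b % (mm:ℤ) = (k * (x11 * t1 + x12 * t2)) % (mm:ℤ) :=
      Int.ModEq.symm (Int.modEq_iff_dvd.mpr hma)
    rwa [Int.emod_eq_of_lt hb0 hb1] at hmod
  · have key : (nn:ℤ) ∣ (d - (t1 * x21 + t2 * x22)) :=
      ⟨-r3 - d * q', by linear_combination -hr3 - d * hq'⟩
    have hmod : d % (nn:ℤ) = (t1 * x21 + t2 * x22) % (nn:ℤ) :=
      Int.ModEq.symm (Int.modEq_iff_dvd.mpr key)
    rwa [Int.emod_eq_of_lt hd0 hd1] at hmod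
end

section
/- Let T(V) be the tensor algebra on a 2-dimensional vector space V = kX1 ⊕ kX2 with the Z^2-grading deg X1 = e1, deg X2 = e2, equipped with the braided Hopf algebra comultiplication determined by Δ(Xi) = Xi ⊗ 1 + 1 ⊗ Xi. If I is the unique maximal graded (with respect to the ℕ-grading by length) Hopf ideal of T(V) generated by homogeneous elements of degree ≥ 2, then I is also Z^2-graded. -/
open scoped Classical

/-- Words in the two generators `X1, X2`: the free monoid on `Fin 2`. -/
abbrev TWord : Type := FreeMonoid (Fin 2)

/-- The tensor algebra `T(V)` on `V = kX1 ⊕ kX2`, modelled as the monoid algebra of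
the free monoid on two generators. -/
abbrev TAlg (k : Type*) [Field k] : Type _ := MonoidAlgebra k TWord

/-- `T(V) ⊗ T(V)`, modelled as the monoid algebra of `TWord × TWord`. -/
abbrev TAlg2 (k : Type*) [Field k] : Type _ := MonoidAlgebra k (TWord × TWord)

/-- The ℕ-degree (length) of a word. -/
def deg1 (w : TWord) : ℕ := (FreeMonoid.toList w).length

/-- The ℤ²-degree of a word: `deg X1 = e1`, `deg X2 = e2`. -/
def deg2 (w : TWord) : Fin 2 → ℕ := fun i => (FreeMonoid.toList w).count i

/-- The ℕ-homogeneous component of degree `N`. -/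
noncomputable def comp1 {k : Type*} [Field k] (N : ℕ) (x : TAlg k) : TAlg k :=
  MonoidAlgebra.ofCoeff (Finsupp.filter (fun w => deg1 w = N) x.coeff)

/-- The ℤ²-homogeneous component of degree `v`. -/
noncomputable def comp2 {k : Type*} [Field k] (v : Fin 2 → ℕ) (x : TAlg k) : TAlg k :=
  MonoidAlgebra.ofCoeff (Finsupp.filter (fun w => deg2 w = v) x.coeff)

/-- The submodule `T(V) ⊗ I` of `T(V) ⊗ T(V)`. -/
noncomputable def leftTI {k : Type*} [Field k] (I : Submodule k (TAlg k)) :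
    Submodule k (TAlg2 k) :=
  ⨆ w : TWord, Submodule.map (MonoidAlgebra.mapDomainLinearMap k k (fun u => (w, u))) I

/-- The submodule `I ⊗ T(V)` of `T(V) ⊗ T(V)`. -/
noncomputable def rightIT {k : Type*} [Field k] (I : Submodule k (TAlg k)) :
    Submodule k (TAlg2 k) :=
  ⨆ w : TWord, Submodule.map (MonoidAlgebra.mapDomainLinearMap k k (fun u => (u, w))) I

/-- `I` is an ℕ-graded Hopf ideal of `T(V)` generated (contained) in degrees `≥ 2`:
it is a two-sided ideal, ℕ-graded, supported in lengths `≥ 2`, and a coideal for the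
comultiplication `Δ`. -/
def IsGradedHopfIdealGeTwo {k : Type*} [Field k]
    (Δ : TAlg k →ₗ[k] TAlg2 k) (I : Submodule k (TAlg k)) : Prop :=
  (∀ a b : TAlg k, ∀ x ∈ I, a * x * b ∈ I) ∧
  (∀ x ∈ I, ∀ N : ℕ, comp1 N x ∈ I) ∧
  (∀ x ∈ I, ∀ w ∈ x.coeff.support, 2 ≤ deg1 w) ∧
  (∀ x ∈ I, Δ x ∈ leftTI I ⊔ rightIT I)

section Aux

variable {k : Type*} [Field k]

/-- Filtering commutes with predicate equivalence (any decidability instances). -/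
lemma myfilter_congr {α M : Type*} [AddCommMonoid M] {p q : α → Prop}
    [DecidablePred p] [DecidablePred q]
    (h : ∀ a, p a ↔ q a) (f : α →₀ M) : Finsupp.filter p f = Finsupp.filter q f := by
  ext a
  rw [Finsupp.filter_apply, Finsupp.filter_apply, if_congr (h a) rfl rfl]

/-- Filtering commutes with `mapDomain`. -/
lemma myfilter_mapDomain {α β M : Type*} [AddCommMonoid M] (p : β → Prop) (f : α → β)
    [DecidablePred p] [DecidablePred fun a => p (f a)]
    (x : α →₀ M) :
    Finsupp.filter p (Finsupp.mapDomain f x) =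
      Finsupp.mapDomain f (Finsupp.filter (fun a => p (f a)) x) := by
  induction x using Finsupp.induction_linear with
  | zero => simp [Finsupp.filter_zero]
  | add a b ha hb => rw [Finsupp.mapDomain_add, Finsupp.filter_add, ha, hb,
      Finsupp.filter_add, Finsupp.mapDomain_add]
  | single a b =>
    rw [Finsupp.mapDomain_single]
    by_cases h : p (f a)
    · rw [Finsupp.filter_single_of_pos _ h,
        Finsupp.filter_single_of_pos (p := fun a => p (f a)) h, Finsupp.mapDomain_single]
    · rw [Finsupp.filter_single_of_neg _ h,
        Finsupp.filter_single_of_neg (p := fun a => p (f a)) h, Finsupp.mapDomain_zero]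

lemma deg2_mul (w u : TWord) (i : Fin 2) : deg2 (w * u) i = deg2 w i + deg2 u i := by
  simp [deg2, FreeMonoid.toList_mul, List.count_append]

/-- An induction principle for `TAlg` keeping everything at `MonoidAlgebra` types. -/
lemma myinduction {p : TAlg k → Prop} (f : TAlg k) (h0 : p 0)
    (hadd : ∀ f g : TAlg k, p f → p g → p (f + g))
    (hsingle : ∀ (w : TWord) (c : k), p (MonoidAlgebra.single w c)) : p f :=
  MonoidAlgebra.induction_linear f h0 hadd hsingle

/-- `Finsupp.filter` on `TAlg`, valued in `TAlg`. -/
noncomputable def filterT (p : TWord → Prop) [DecidablePred p] (x : TAlg k) : TAlg k :=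
  MonoidAlgebra.ofCoeff (Finsupp.filter p x.coeff)

lemma filterT_zero (p : TWord → Prop) [DecidablePred p] :
    filterT (k := k) p 0 = 0 := congrArg MonoidAlgebra.ofCoeff (Finsupp.filter_zero p)

lemma filterT_add (p : TWord → Prop) [DecidablePred p] (x y : TAlg k) :
    filterT p (x + y) = filterT p x + filterT p y :=
  congrArg MonoidAlgebra.ofCoeff Finsupp.filter_add

lemma filterT_single_pos (p : TWord → Prop) [DecidablePred p] {w : TWord} {c : k}
    (h : p w) : filterT p (MonoidAlgebra.single w c) = MonoidAlgebra.single w c :=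
  congrArg MonoidAlgebra.ofCoeff (Finsupp.filter_single_of_pos _ h)

lemma filterT_single_neg (p : TWord → Prop) [DecidablePred p] {w : TWord} {c : k}
    (h : ¬p w) : filterT p (MonoidAlgebra.single w c) = 0 :=
  congrArg MonoidAlgebra.ofCoeff (Finsupp.filter_single_of_neg _ h)

lemma filterT_congr {p q : TWord → Prop} [DecidablePred p] [DecidablePred q]
    (h : ∀ a, p a ↔ q a) (x : TAlg k) : filterT p x = filterT q x :=
  congrArg MonoidAlgebra.ofCoeff (myfilter_congr h x.coeff)

lemma filterT_single_mul (p : TWord → Prop) [DecidablePred p] (w : TWord) (c : k)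
    [DecidablePred fun u => p (w * u)] (x : TAlg k) :
    filterT p (MonoidAlgebra.single w c * x) =
      MonoidAlgebra.single w c * filterT (fun u => p (w * u)) x := by
  induction x using myinduction with
  | h0 => rw [mul_zero, filterT_zero, filterT_zero, mul_zero]
  | hadd a b ha hb => rw [mul_add, filterT_add, ha, hb, filterT_add, mul_add]
  | hsingle a b =>
    rw [MonoidAlgebra.single_mul_single]
    by_cases h : p (w * a)
    · rw [filterT_single_pos _ h, filterT_single_pos (p := fun u => p (w * u)) h,
        MonoidAlgebra.single_mul_single]
    · rw [filterT_single_neg _ h, filterT_single_neg (p := fun u => p (w * u)) h,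
        mul_zero]

lemma filterT_mul_single (p : TWord → Prop) [DecidablePred p] (w : TWord) (c : k)
    [DecidablePred fun u => p (u * w)] (x : TAlg k) :
    filterT p (x * MonoidAlgebra.single w c) =
      filterT (fun u => p (u * w)) x * MonoidAlgebra.single w c := by
  induction x using myinduction with
  | h0 => rw [zero_mul, filterT_zero, filterT_zero, zero_mul]
  | hadd a b ha hb => rw [add_mul, filterT_add, ha, hb, filterT_add, add_mul]
  | hsingle a b =>
    rw [MonoidAlgebra.single_mul_single]
    by_cases h : p (a * w)
    · rw [filterT_single_pos _ h, filterT_single_pos (p := fun u => p (u * w)) h,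
        MonoidAlgebra.single_mul_single]
    · rw [filterT_single_neg _ h, filterT_single_neg (p := fun u => p (u * w)) h,
        zero_mul]

/-- The candidate submodule: span of all `ℤ²`-homogeneous components of elements of `I`. -/
noncomputable def Jsub (I : Submodule k (TAlg k)) : Submodule k (TAlg k) :=
  Submodule.span k {y : TAlg k | ∃ x ∈ I, ∃ v : Fin 2 → ℕ, comp2 v x = y}

lemma comp2_mem_Jsub (I : Submodule k (TAlg k)) {x : TAlg k} (hx : x ∈ I)
    (v : Fin 2 → ℕ) : comp2 v x ∈ Jsub I :=
  Submodule.subset_span ⟨x, hx, v, rfl⟩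

/-- `Finsupp.filter` on `TAlg2` as a linear map. -/
noncomputable def filterLM2 (p : TWord × TWord → Prop) [DecidablePred p] :
    TAlg2 k →ₗ[k] TAlg2 k where
  toFun x := MonoidAlgebra.ofCoeff (Finsupp.filter p x.coeff)
  map_add' _ _ := congrArg MonoidAlgebra.ofCoeff Finsupp.filter_add
  map_smul' _ _ := congrArg MonoidAlgebra.ofCoeff Finsupp.filter_smul

/-- The key case analysis: filtering an element of `I` by a shifted `ℤ²`-degree
condition lands in `Jsub I`. -/
lemma shifted_filter_mem (I : Submodule k (TAlg k)) (a v : Fin 2 → ℕ) {x : TAlg k}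
    (hx : x ∈ I) :
    MonoidAlgebra.ofCoeff (Finsupp.filter (fun u => (fun i => deg2 u i + a i) = v) x.coeff) ∈
      Jsub I := by
  by_cases h : ∀ i, a i ≤ v i
  · have hpq : ∀ u : TWord,
        ((fun i => deg2 u i + a i) = v) ↔ (deg2 u = fun i => v i - a i) := by
      intro u
      rw [funext_iff, funext_iff]
      constructor <;> intro h' i <;> have h1 := h' i <;> have h2 := h i <;>
        omega
    have heq : MonoidAlgebra.ofCoeff
        (Finsupp.filter (fun u => (fun i => deg2 u i + a i) = v) x.coeff) =
        comp2 (fun i => v i - a i) x := congrArg MonoidAlgebra.ofCoeff (myfilter_congr hpq x.coeff)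
    exact heq.symm ▸ comp2_mem_Jsub I hx (fun i => v i - a i)
  · push_neg at h
    obtain ⟨i, hi⟩ := h
    have h0' : Finsupp.filter (fun u => (fun i => deg2 u i + a i) = v) x.coeff = 0 := by
      rw [Finsupp.filter_eq_zero_iff]
      intro u hu
      exact absurd (le_of_le_of_eq (Nat.le_add_left (a i) (deg2 u i)) (congrFun hu i))
        (not_le.mpr hi)
    have h0 : MonoidAlgebra.ofCoeff
        (Finsupp.filter (fun u => (fun i => deg2 u i + a i) = v) x.coeff) = 0 := by
      rw [h0']; rfl
    rw [h0]
    exact (Jsub I).zero_mem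

end Aux

/-- Lemma 4.2: let `Δ` be the braided-Hopf comultiplication of `T(V)` determined by
`Δ(Xi) = Xi ⊗ 1 + 1 ⊗ Xi` (in particular `Δ` preserves both the ℕ-grading and the
ℤ²-grading).  If `I` is the (unique) maximal ℕ-graded Hopf ideal generated by
homogeneous elements of degree `≥ 2`, then `I` is also ℤ²-graded. -/
theorem stmt_14 (k : Type*) [Field k]
    (Δ : TAlg k →ₗ[k] TAlg2 k)
    (hprim : ∀ i : Fin 2,
      Δ (MonoidAlgebra.single (FreeMonoid.of i) 1) =
        MonoidAlgebra.single (FreeMonoid.of i, 1) 1 +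
        MonoidAlgebra.single (1, FreeMonoid.of i) 1)
    (hgr1 : ∀ (N : ℕ) (x : TAlg k),
      Δ (comp1 N x) = MonoidAlgebra.ofCoeff (Finsupp.filter (fun p => deg1 p.1 + deg1 p.2 = N) (Δ x).coeff))
    (hgr2 : ∀ (v : Fin 2 → ℕ) (x : TAlg k),
      Δ (comp2 v x) =
        MonoidAlgebra.ofCoeff (Finsupp.filter (fun p => (fun i => deg2 p.1 i + deg2 p.2 i) = v) (Δ x).coeff))
    (I : Submodule k (TAlg k))
    (hI : IsGradedHopfIdealGeTwo Δ I)
    (hmax : ∀ J : Submodule k (TAlg k), IsGradedHopfIdealGeTwo Δ J → J ≤ I) :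
    ∀ x ∈ I, ∀ v : Fin 2 → ℕ, comp2 v x ∈ I := by
  obtain ⟨hIdeal, hGr1, hSupp, hCo⟩ := hI
  -- J := Jsub I is a two-sided ideal
  have key : ∀ (v : Fin 2 → ℕ) (x : TAlg k), x ∈ I → ∀ a b : TAlg k,
      a * comp2 v x * b ∈ Jsub I := by
    intro v x hx a b
    induction a using myinduction generalizing b with
    | h0 => rw [zero_mul, zero_mul]; exact (Jsub I).zero_mem
    | hadd a₁ a₂ h₁ h₂ =>
      rw [add_mul, add_mul]
      exact (Jsub I).add_mem (h₁ b) (h₂ b)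
    | hsingle w c =>
      induction b using myinduction with
      | h0 => rw [mul_zero]; exact (Jsub I).zero_mem
      | hadd b₁ b₂ h₁ h₂ =>
        rw [mul_add]
        exact (Jsub I).add_mem h₁ h₂
      | hsingle w' c' =>
        have hx' : MonoidAlgebra.single w c * x * MonoidAlgebra.single w' c' ∈ I :=
          hIdeal _ _ x hx
        have e1 : comp2 (fun i => deg2 w i + v i + deg2 w' i)
            (MonoidAlgebra.single w c * x * MonoidAlgebra.single w' c') =
            filterT (fun u => (deg2 (u * w') = fun i => deg2 w i + v i + deg2 w' i))
              (MonoidAlgebra.single w c * x) * MonoidAlgebra.single w' c' :=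
          filterT_mul_single _ w' c' _
        have e2 : filterT (fun u => (deg2 (u * w') = fun i => deg2 w i + v i + deg2 w' i))
            (MonoidAlgebra.single w c * x) =
            MonoidAlgebra.single w c *
              filterT (fun u => (deg2 (w * u * w') = fun i => deg2 w i + v i + deg2 w' i)) x :=
          filterT_single_mul _ w c x
        have e3 : filterT (fun u => (deg2 (w * u * w') = fun i => deg2 w i + v i + deg2 w' i)) x =
            comp2 v x := by
          refine filterT_congr (fun u => ?_) x
          rw [funext_iff, funext_iff]
          constructor <;> intro h' i <;> have h1 := h' i <;>
            simp only [deg2_mul] at h1 ⊢ <;> omega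
        have heq : comp2 (fun i => deg2 w i + v i + deg2 w' i)
            (MonoidAlgebra.single w c * x * MonoidAlgebra.single w' c') =
            MonoidAlgebra.single w c * comp2 v x * MonoidAlgebra.single w' c' := by
          rw [e1, e2, e3]
        exact heq ▸ comp2_mem_Jsub I hx' _
  have hJideal : ∀ a b : TAlg k, ∀ x ∈ Jsub I, a * x * b ∈ Jsub I := by
    intro a b x hx
    induction hx using Submodule.span_induction with
    | mem y hy =>
      obtain ⟨x₀, hx₀, v, rfl⟩ := hy
      exact key v x₀ hx₀ a b
    | zero => rw [mul_zero, zero_mul]; exact (Jsub I).zero_mem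
    | add y z _ _ hy hz =>
      rw [mul_add, add_mul]
      exact (Jsub I).add_mem hy hz
    | smul c y _ hy =>
      rw [mul_smul_comm, smul_mul_assoc]
      exact (Jsub I).smul_mem c hy
  -- J is ℕ-graded
  have hJgr1 : ∀ x ∈ Jsub I, ∀ N : ℕ, comp1 N x ∈ Jsub I := by
    intro x hx N
    induction hx using Submodule.span_induction with
    | mem y hy =>
      obtain ⟨x₀, hx₀, v, rfl⟩ := hy
      have : comp1 N (comp2 v x₀) = comp2 v (comp1 N x₀) := by
        unfold comp1 comp2
        ext a
        simp only [MonoidAlgebra.coeff_ofCoeff, Finsupp.filter_apply]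
        split_ifs <;> tauto
      rw [this]
      exact comp2_mem_Jsub I (hGr1 x₀ hx₀ N) v
    | zero =>
      have : comp1 N (0 : TAlg k) = 0 := congrArg MonoidAlgebra.ofCoeff (Finsupp.filter_zero _)
      rw [this]; exact (Jsub I).zero_mem
    | add y z _ _ hy hz =>
      have : comp1 N (y + z) = comp1 N y + comp1 N z :=
          congrArg MonoidAlgebra.ofCoeff Finsupp.filter_add
      rw [this]
      exact (Jsub I).add_mem hy hz
    | smul c y _ hy =>
      have : comp1 N (c • y) = c • comp1 N y :=
          congrArg MonoidAlgebra.ofCoeff Finsupp.filter_smul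
      rw [this]
      exact (Jsub I).smul_mem c hy
  -- J is supported in degrees ≥ 2
  have hJsupp : ∀ x ∈ Jsub I, ∀ w ∈ x.coeff.support, 2 ≤ deg1 w := by
    intro x hx
    induction hx using Submodule.span_induction with
    | mem y hy =>
      obtain ⟨x₀, hx₀, v, rfl⟩ := hy
      intro w hw
      rw [comp2, MonoidAlgebra.coeff_ofCoeff, Finsupp.support_filter, Finset.mem_filter] at hw
      exact hSupp x₀ hx₀ w hw.1
    | zero => intro w hw; simp at hw
    | add y z _ _ hy hz =>
      intro w hw
      rw [MonoidAlgebra.coeff_add] at hw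
      rcases Finset.mem_union.mp (Finsupp.support_add hw) with h | h
      exacts [hy w h, hz w h]
    | smul c y _ hy =>
      intro w hw
      rw [MonoidAlgebra.coeff_smul] at hw
      exact hy w (Finsupp.support_smul hw)
  -- J is a coideal
  have hJco : ∀ x ∈ Jsub I, Δ x ∈ leftTI (Jsub I) ⊔ rightIT (Jsub I) := by
    intro x hx
    induction hx using Submodule.span_induction with
    | mem y hy =>
      obtain ⟨x₀, hx₀, v, rfl⟩ := hy
      rw [hgr2 v x₀]
      have hΔ := hCo x₀ hx₀
      rw [Submodule.mem_sup] at hΔ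
      obtain ⟨y₁, hy₁, y₂, hy₂, hsum⟩ := hΔ
      have hleftle : leftTI I ≤
          (leftTI (Jsub I)).comap
            (filterLM2 (k := k) (fun p => (fun i => deg2 p.1 i + deg2 p.2 i) = v)) := by
        refine iSup_le fun w => ?_
        intro z hz
        rw [Submodule.mem_map] at hz
        obtain ⟨x₁, hx₁, rfl⟩ := hz
        rw [Submodule.mem_comap]
        have key2 : filterLM2 (k := k) (fun p => (fun i => deg2 p.1 i + deg2 p.2 i) = v)
            (MonoidAlgebra.mapDomainLinearMap k k (fun u => (w, u)) x₁) =
            MonoidAlgebra.ofCoeff (Finsupp.mapDomain (fun u => (w, u))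
              (Finsupp.filter
                (fun u => (fun i => deg2 ((w, u) : TWord × TWord).1 i +
                  deg2 ((w, u) : TWord × TWord).2 i) = v) x₁.coeff)) :=
          congrArg MonoidAlgebra.ofCoeff (myfilter_mapDomain _ _ x₁.coeff)
        have hq : MonoidAlgebra.ofCoeff (Finsupp.filter
            (fun u => (fun i => deg2 ((w, u) : TWord × TWord).1 i +
              deg2 ((w, u) : TWord × TWord).2 i) = v) x₁.coeff) ∈ Jsub I := by
          have hcong : Finsupp.filter
              (fun u => (fun i => deg2 ((w, u) : TWord × TWord).1 i +
                deg2 ((w, u) : TWord × TWord).2 i) = v) x₁.coeff =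
              Finsupp.filter (fun u => (fun i => deg2 u i + deg2 w i) = v) x₁.coeff := by
            refine myfilter_congr (fun u => ?_) x₁.coeff
            rw [funext_iff, funext_iff]
            constructor <;> intro h' i <;> have h1 := h' i <;>
              simp only at h1 ⊢ <;> omega
          rw [hcong]
          exact shifted_filter_mem I (deg2 w) v hx₁
        exact le_iSup (fun w : TWord =>
          Submodule.map (MonoidAlgebra.mapDomainLinearMap k k (fun u => (w, u))) (Jsub I)) w
          (Submodule.mem_map.mpr ⟨_, hq, key2.symm⟩)
      have hrightle : rightIT I ≤
          (rightIT (Jsub I)).comap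
            (filterLM2 (k := k) (fun p => (fun i => deg2 p.1 i + deg2 p.2 i) = v)) := by
        refine iSup_le fun w => ?_
        intro z hz
        rw [Submodule.mem_map] at hz
        obtain ⟨x₁, hx₁, rfl⟩ := hz
        rw [Submodule.mem_comap]
        have key2 : filterLM2 (k := k) (fun p => (fun i => deg2 p.1 i + deg2 p.2 i) = v)
            (MonoidAlgebra.mapDomainLinearMap k k (fun u => (u, w)) x₁) =
            MonoidAlgebra.ofCoeff (Finsupp.mapDomain (fun u => (u, w))
              (Finsupp.filter
                (fun u => (fun i => deg2 ((u, w) : TWord × TWord).1 i +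
                  deg2 ((u, w) : TWord × TWord).2 i) = v) x₁.coeff)) :=
          congrArg MonoidAlgebra.ofCoeff (myfilter_mapDomain _ _ x₁.coeff)
        have hq : MonoidAlgebra.ofCoeff (Finsupp.filter
            (fun u => (fun i => deg2 ((u, w) : TWord × TWord).1 i +
              deg2 ((u, w) : TWord × TWord).2 i) = v) x₁.coeff) ∈ Jsub I := by
          have hcong : Finsupp.filter
              (fun u => (fun i => deg2 ((u, w) : TWord × TWord).1 i +
                deg2 ((u, w) : TWord × TWord).2 i) = v) x₁.coeff =
              Finsupp.filter (fun u => (fun i => deg2 u i + deg2 w i) = v) x₁.coeff :=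
            myfilter_congr (fun u => Iff.rfl) x₁.coeff
          rw [hcong]
          exact shifted_filter_mem I (deg2 w) v hx₁
        exact le_iSup (fun w : TWord =>
          Submodule.map (MonoidAlgebra.mapDomainLinearMap k k (fun u => (u, w))) (Jsub I)) w
          (Submodule.mem_map.mpr ⟨_, hq, key2.symm⟩)
      have hleft : MonoidAlgebra.ofCoeff
          (Finsupp.filter (fun p => (fun i => deg2 p.1 i + deg2 p.2 i) = v) y₁.coeff) ∈
          leftTI (Jsub I) := hleftle hy₁
      have hright : MonoidAlgebra.ofCoeff
          (Finsupp.filter (fun p => (fun i => deg2 p.1 i + deg2 p.2 i) = v) y₂.coeff) ∈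
          rightIT (Jsub I) := hrightle hy₂
      rw [← hsum, MonoidAlgebra.coeff_add, Finsupp.filter_add]
      exact Submodule.add_mem_sup hleft hright
    | zero =>
      rw [map_zero]
      exact (leftTI (Jsub I) ⊔ rightIT (Jsub I)).zero_mem
    | add y z _ _ hy hz =>
      rw [map_add]
      exact (leftTI (Jsub I) ⊔ rightIT (Jsub I)).add_mem hy hz
    | smul c y _ hy =>
      rw [map_smul]
      exact (leftTI (Jsub I) ⊔ rightIT (Jsub I)).smul_mem c hy
  have hJ : IsGradedHopfIdealGeTwo Δ (Jsub I) := ⟨hJideal, hJgr1, hJsupp, hJco⟩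
  intro x hx v
  exact hmax (Jsub I) hJ (comp2_mem_Jsub I hx v)
end

section
/- Let G be a finite abelian group with 3-cocycle Φ = ∂(J) the coboundary of a 2-cochain J, and let V ∈ {}^G_G YD be a Yetter-Drinfeld module of diagonal type with basis {X_i}, δ_L(X_i) = g_i ⊗ X_i. Define the twisted action g ▷^J X = (J(g,x)/J(x,g))·(g ▷ X) for X of G-degree x. Then the structure constants of V and of the twisted module V^J agree in products: if g_i ▷ X_j = q_{ij} X_j and g_i ▷^J X_j = q'_{ij} X_j, then q'_{ij} q'_{ji} = q_{ij} q_{ji} and q'_{ii} = q_{ii} for all i, j. Consequently V and V^J have the same generalized Dynkin diagram. -/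
/-- Twisting by a 2-cochain `J` does not change the generalized Dynkin diagram of a
diagonal Yetter–Drinfeld module: if `V` has basis `X_i` of `G`-degrees `g i` with
structure constants `q i j` (i.e. `g i ▷ X j = q i j • X j`), and the twisted action
is `g ▷ᴶ X = (J(g,x)/J(x,g))·(g ▷ X)`, so that
`q' i j = (J (g i) (g j) / J (g j) (g i)) · q i j`, then
`q' i j · q' j i = q i j · q j i` and `q' i i = q i i`. -/
theorem stmt_15 (G : Type*) [CommGroup G] [Fintype G]
    (k : Type*) [Field k] (ι : Type*)
    (J : G → G → kˣ) (hJ : ∀ x : G, J x 1 = 1 ∧ J 1 x = 1)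
    (g : ι → G) (q q' : ι → ι → kˣ)
    (hq' : ∀ i j, q' i j = J (g i) (g j) / J (g j) (g i) * q i j) :
    (∀ i j, q' i j * q' j i = q i j * q j i) ∧ (∀ i, q' i i = q i i) := by
  constructor
  · intro i j
    rw [hq' i j, hq' j i, mul_mul_mul_comm, div_mul_div_comm,
      mul_comm (J (g i) (g j)) (J (g j) (g i)), div_self', one_mul]
  · intro i
    rw [hq' i i, div_self', one_mul]
end

section
/- With m = 𝕞^2, the map J: Z_{m} × Z_{m} → k^* (viewed on the cyclic group Z_m = ⟨g⟩) given by J(g^i, g^j) = q^{i(j − j')}, where j' is the remainder of j modulo 𝕞 and q is a primitive m-th root of unity, satisfies: ∂(J)(g^i, g^j, g^k) = 𝕢^{i'·⌊(j'+k')/𝕞⌋}, where 𝕢 = q^𝕞 and i', j', k' are the remainders modulo 𝕞. In other words, ∂(J) is the pull-back along Z_m → Z_𝕞 of the 3-cocycle Φ_s with s = 1 on Z_𝕞. -/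
/-- With `m = 𝕞²` and `q` a primitive `m`-th root of unity, the 2-cochain
`J(gⁱ, gʲ) = q^(i·(j − j'))` on `ℤ/m` (where `j'` is the remainder of `j` mod `𝕞`)
has differential `∂(J)(gⁱ, gʲ, gᵏ) = 𝕢^(i'·⌊(j'+k')/𝕞⌋)` with `𝕢 = q^𝕞`; that is,
`∂(J)` is the pull-back along `ℤ/m → ℤ/𝕞` of the 3-cocycle `Φ_s` with `s = 1`. -/
theorem stmt_16 (k : Type*) [Field k] (mm : ℕ) (hmm : 0 < mm)
    (m : ℕ) (hm : m = mm ^ 2) [NeZero m]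
    (q : kˣ) (hq : IsPrimitiveRoot q m) :
    ∀ x y z : ZMod m,
      (fun u v : ZMod m => q ^ (u.val * (v.val - v.val % mm))) y z *
        (fun u v : ZMod m => q ^ (u.val * (v.val - v.val % mm))) x (y + z) *
        ((fun u v : ZMod m => q ^ (u.val * (v.val - v.val % mm))) (x + y) z *
          (fun u v : ZMod m => q ^ (u.val * (v.val - v.val % mm))) x y)⁻¹ =
      (q ^ mm) ^ ((x.val % mm) * ((y.val % mm + z.val % mm) / mm)) := by
  intro x y z
  simp only []
  have hsub : ∀ n : ℕ, n - n % mm = mm * (n / mm) := fun n => by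
    have := Nat.div_add_mod n mm; omega
  simp only [hsub]
  rw [mul_inv_eq_iff_eq_mul, ← pow_mul, ← pow_add, ← pow_add, ← pow_add,
    pow_eq_pow_iff_modEq, ← hq.eq_orderOf, ← ZMod.natCast_eq_natCast_iff]
  push_cast
  have hdvd : mm ∣ m := by rw [hm]; exact dvd_pow_self mm two_ne_zero
  have hdm : ∀ n : ℕ, ((n : ℕ) : ZMod m) = mm * (↑(n / mm)) + ↑(n % mm) := by
    intro n
    have := congrArg (Nat.cast : ℕ → ZMod m) (Nat.div_add_mod n mm)
    push_cast at this; exact this.symm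
  have h1 : (((y + z).val : ℕ) : ZMod m) = (y.val : ZMod m) + z.val := by
    rw [ZMod.val_add]
    have := (ZMod.natCast_eq_natCast_iff _ _ m).mpr (Nat.mod_modEq (y.val + z.val) m)
    push_cast at this; exact this
  have h2 : (((x + y).val : ℕ) : ZMod m) = (x.val : ZMod m) + y.val := by
    rw [ZMod.val_add]
    have := (ZMod.natCast_eq_natCast_iff _ _ m).mpr (Nat.mod_modEq (x.val + y.val) m)
    push_cast at this; exact this
  have h3 := hdm x.val
  have h4 := hdm y.val
  have h5 := hdm z.val
  have h6 := hdm (y + z).val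
  have h7 : ((y.val % mm : ℕ) : ZMod m) + ((z.val % mm : ℕ) : ZMod m)
      = mm * (((y.val % mm + z.val % mm) / mm : ℕ) : ZMod m)
        + (((y + z).val % mm : ℕ) : ZMod m) := by
    have e1 : (y + z).val % mm = (y.val % mm + z.val % mm) % mm := by
      rw [ZMod.val_add, Nat.mod_mod_of_dvd _ hdvd, Nat.add_mod]
    have e2 := Nat.div_add_mod (y.val % mm + z.val % mm) mm
    have : (y.val % mm : ℕ) + (z.val % mm : ℕ)
        = mm * ((y.val % mm + z.val % mm) / mm) + (y + z).val % mm := by omega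
    have := congrArg (Nat.cast : ℕ → ZMod m) this
    push_cast at this; exact this
  have h8 : (mm : ZMod m) * mm = 0 := by
    have : ((mm ^ 2 : ℕ) : ZMod m) = 0 := by rw [← hm]; exact ZMod.natCast_self m
    push_cast at this
    rw [← pow_two]; exact this
  linear_combination (↑x.val : ZMod m) * h1 - ((mm : ZMod m) * ↑(z.val / mm)) * h2
    + ((mm : ZMod m) * ↑((y.val % mm + z.val % mm) / mm)) * h3
    + (↑x.val : ZMod m) * h4 + (↑x.val : ZMod m) * h5 - (↑x.val : ZMod m) * h6
    + (↑x.val : ZMod m) * h7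
    + ((↑((y.val % mm + z.val % mm) / mm) : ZMod m) * ↑(x.val / mm)) * h8
end
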